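/- arXiv:2603.28430 — 2 statements merged into one kernel-verified Lean document; each statement's English description precedes it below -/
import Mathlib

section
/- Every rotation of ℝ⁴ arises from a quaternion pair: for every linear isometry R of ℍ ≅ ℝ⁴ whose matrix with respect to the basis {1, i, j, k} has determinant 1, there exist unit quaternions q_L and q_R such that R(v) = q_L * v * conj(q_R) for all quaternions v. Hence the pair (q_L, q_R), unique up to simultaneous sign change, parameterizes all of SO(4) (the isoclinic decomposition). -/
/-!
By Cartan–Dieudonné, every orthogonal map of `ℍ` is a product of reflections, and the reflection
in the hyperplane orthogonal to a unit quaternion `u` is `v ↦ -u * star v * u`. Composing such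
maps, a product of `n` reflections has the form `v ↦ p * star^[n] v * star q` with `p`, `q` unit
quaternions, and determinant `(-1) ^ n`; determinant `1` forces `n` even. If two pairs give the
same map, `c = star qL * pL` satisfies `c * v * star c = v` for all `v`, so `c` is central, hence
real of norm one, i.e. `c = ±1`.
-/

open Quaternion

theorem Submodule.det_reflection_orthogonal_singleton {𝕜 E : Type*} [RCLike 𝕜]
    [NormedAddCommGroup E] [InnerProductSpace 𝕜 E] [FiniteDimensional 𝕜 E] {a : E}
    (ha : a ≠ 0) : LinearMap.det (𝕜 ∙ a)ᗮ.reflection.toLinearMap = -1 := by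
  rw [det_reflection, orthogonal_orthogonal, finrank_span_singleton ha, pow_one]

namespace Quaternion

theorem eq_coe_re_of_forall_commute {R : Type*} [CommRing R] [IsAddTorsionFree R]
    {c : ℍ[R]} (hc : ∀ v, c * v = v * c) : c = c.re := by
  -- `⟨0, 1, 0, 0⟩` elaborates at `ℍ[R,-1,0,-1]`, which `simp` will not match against `ℍ[R]`.
  obtain ⟨i, hi⟩ : ∃ i : ℍ[R], i.re = 0 ∧ i.imI = 1 ∧ i.imJ = 0 ∧ i.imK = 0 :=
    ⟨⟨0, 1, 0, 0⟩, rfl, rfl, rfl, rfl⟩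
  obtain ⟨j, hj⟩ : ∃ j : ℍ[R], j.re = 0 ∧ j.imI = 0 ∧ j.imJ = 1 ∧ j.imK = 0 :=
    ⟨⟨0, 0, 1, 0⟩, rfl, rfl, rfl, rfl⟩
  have hci : c.imK = 0 ∧ c.imJ = 0 := by
    simpa [hi, self_eq_neg, eq_comm (a := -c.imJ)] using Quaternion.ext_iff.mp (hc i)
  have hcj : c.imK = 0 ∧ c.imI = 0 := by
    simpa [hj, self_eq_neg, eq_comm (a := -c.imK)] using Quaternion.ext_iff.mp (hc j)
  ext <;> simp [hci, hcj.2]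

variable {a : ℍ[ℝ]}

theorem mul_star_of_norm_eq_one (ha : ‖a‖ = 1) : a * star a = 1 := by
  rw [self_mul_star, normSq_eq_norm_mul_self, ha, mul_one, coe_one]

theorem star_mul_of_norm_eq_one (ha : ‖a‖ = 1) : star a * a = 1 := by
  rw [star_mul_self, normSq_eq_norm_mul_self, ha, mul_one, coe_one]

theorem eq_one_or_eq_neg_one_of_forall_commute (ha : ‖a‖ = 1) (hc : ∀ v, a * v = v * a) :
    a = 1 ∨ a = -1 := by
  have hre := eq_coe_re_of_forall_commute hc
  rw [hre, norm_coe, Real.norm_eq_abs, abs_eq zero_le_one] at ha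
  rcases ha with h | h
  · exact Or.inl (by rw [hre, h, coe_one])
  · exact Or.inr (by rw [hre, h, coe_neg, coe_one])

theorem reflection_orthogonal_singleton_apply (ha : ‖a‖ = 1) (v : ℍ[ℝ]) :
    (ℝ ∙ a)ᗮ.reflection v = -(a * star v * a) := by
  rw [Submodule.reflection_orthogonal_apply, Submodule.reflection_singleton_apply, ha, inner_def,
    RCLike.ofReal_one, one_pow, div_one, neg_inj]
  calc 2 • (a * star v).re • a - v
      = (a * star v + star (a * star v)) * a - v * (star a * a) := by
        rw [self_add_star, star_mul_of_norm_eq_one ha, mul_one, ← coe_mul_eq_smul]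
        noncomm_ring
    _ = a * star v * a := by rw [star_mul, star_star]; noncomm_ring

theorem exists_linearIsometryEquiv_eq_mul_iterate_star_mul (φ : ℍ[ℝ] ≃ₗᵢ[ℝ] ℍ[ℝ]) :
    ∃ (n : ℕ) (p q : ℍ[ℝ]), ‖p‖ = 1 ∧ ‖q‖ = 1 ∧ (∀ v, φ v = p * star^[n] v * star q) ∧
      LinearMap.det φ.toLinearEquiv.toLinearMap = (-1) ^ n := by
  obtain ⟨l, -, rfl⟩ := φ.reflections_generate_dim
  induction l with
  | nil => exact ⟨0, 1, 1, norm_one, norm_one, fun v => by simp, LinearMap.det_id⟩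
  | cons a l ih =>
    rw [List.map_cons, List.prod_cons]
    by_cases ha : a = 0
    · have hzero : (ℝ ∙ a)ᗮ.reflection = 1 := LinearIsometryEquiv.ext fun v =>
        Submodule.reflection_mem_subspace_eq_self (by simp [ha])
      rwa [hzero, one_mul]
    obtain ⟨n, p, q, hp, hq, hφ, hdet⟩ := ih
    set u := ‖a‖⁻¹ • a
    have hu : ‖u‖ = 1 := by simp [u, norm_smul, ha]
    have hunit : (ℝ ∙ a)ᗮ.reflection = (ℝ ∙ u)ᗮ.reflection := by
      simp only [u, Submodule.span_singleton_smul_eq (by simpa using ha : IsUnit ‖a‖⁻¹) a]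
    refine ⟨n + 1, -(u * q), star u * p, by simp [hu, hq], by simp [hu, hp], fun v => ?_, ?_⟩
    · rw [LinearIsometryEquiv.coe_mul, Function.comp_apply, hunit,
        reflection_orthogonal_singleton_apply hu, hφ, Function.iterate_succ_apply']
      simp only [star_mul, star_star]
      noncomm_ring
    · rw [pow_succ', ← hdet, ← Submodule.det_reflection_orthogonal_singleton ha]
      exact LinearMap.det_comp _ _

theorem eq_and_eq_or_eq_neg_and_eq_neg_of_forall_mul_mul_star {pL pR qL qR : ℍ[ℝ]}
    (hpL : ‖pL‖ = 1) (hqL : ‖qL‖ = 1) (hqR : ‖qR‖ = 1)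
    (h : ∀ v, pL * v * star pR = qL * v * star qR) :
    (pL = qL ∧ pR = qR) ∨ (pL = -qL ∧ pR = -qR) := by
  set c := star qL * pL
  set d := star qR * pR
  have hcd : ∀ v, c * v * star d = v := fun v => calc
    c * v * star d = star qL * (pL * v * star pR) * qR := by
      simp only [c, d, star_mul, star_star]; noncomm_ring
    _ = (star qL * qL) * v * (star qR * qR) := by rw [h]; noncomm_ring
    _ = v := by rw [star_mul_of_norm_eq_one hqL, star_mul_of_norm_eq_one hqR, one_mul, mul_one]
  have hc : ‖c‖ = 1 := by simp [c, hqL, hpL]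
  have hdc : d = c := star_injective <| calc
    star d = (star c * c) * star d := by rw [star_mul_of_norm_eq_one hc, one_mul]
    _ = star c := by rw [mul_assoc, ← mul_one c, hcd 1]; simp
  have hcc : ∀ v, c * v * star c = v := hdc ▸ hcd
  have hcomm : ∀ v, c * v = v * c := fun v => calc
    c * v = c * v * (star c * c) := by rw [star_mul_of_norm_eq_one hc, mul_one]
    _ = v * c := by rw [← mul_assoc, hcc]
  have hpL_eq : pL = qL * c := by rw [← mul_assoc, mul_star_of_norm_eq_one hqL, one_mul]
  have hpR_eq : pR = qR * c := by
    rw [← hdc, ← mul_assoc, mul_star_of_norm_eq_one hqR, one_mul]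
  rcases eq_one_or_eq_neg_one_of_forall_commute hc hcomm with h1 | h1
  · exact Or.inl ⟨by rw [hpL_eq, h1, mul_one], by rw [hpR_eq, h1, mul_one]⟩
  · exact Or.inr ⟨by rw [hpL_eq, h1, mul_neg_one], by rw [hpR_eq, h1, mul_neg_one]⟩

end Quaternion

/-- Every rotation of `ℝ⁴ ≅ ℍ` arises from a quaternion pair:
for every linear isometry `R` of `ℍ` whose matrix with respect to the basis
`{1, i, j, k}` has determinant 1, there exist unit quaternions `q_L`, `q_R`
with `R(v) = q_L * v * conj(q_R)` for all `v`; the pair is unique up to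
simultaneous sign change (the isoclinic decomposition of `SO(4)`). -/
theorem isoquant_so4_surjectivity
    (R : Quaternion ℝ ≃ₗᵢ[ℝ] Quaternion ℝ)
    (hdet : (LinearMap.toMatrix
        (QuaternionAlgebra.basisOneIJK (-1 : ℝ) 0 (-1))
        (QuaternionAlgebra.basisOneIJK (-1 : ℝ) 0 (-1))
        R.toLinearEquiv.toLinearMap).det = 1) :
    ∃ qL qR : Quaternion ℝ, ‖qL‖ = 1 ∧ ‖qR‖ = 1 ∧
      (∀ v : Quaternion ℝ, R v = qL * v * star qR) ∧
      (∀ pL pR : Quaternion ℝ, ‖pL‖ = 1 → ‖pR‖ = 1 →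
        (∀ v : Quaternion ℝ, R v = pL * v * star pR) →
        (pL = qL ∧ pR = qR) ∨ (pL = -qL ∧ pR = -qR)) := by
  obtain ⟨n, qL, qR, hqL, hqR, hR, hdetR⟩ := exists_linearIsometryEquiv_eq_mul_iterate_star_mul R
  have hn : Even n := by
    rw [← neg_one_pow_eq_one_iff_even (R := ℝ) (by norm_num), ← hdetR]
    exact (LinearMap.det_toMatrix _ _).symm.trans hdet
  simp only [star_involutive.iterate_even hn, id] at hR
  refine ⟨qL, qR, hqL, hqR, hR, fun pL pR hpL _ hp => ?_⟩
  exact eq_and_eq_or_eq_neg_and_eq_neg_of_forall_mul_mul_star hpL hqL hqR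
    fun v => (hp v).symm.trans (hR v)
end

section
/- Every 4×4 real skew-symmetric matrix X admits a unique decomposition X = A + B, where A is the matrix (in the basis {1, i, j, k} of ℍ) of left multiplication v ↦ a * v by a purely imaginary quaternion a, and B is the matrix of right multiplication v ↦ v * b by a purely imaginary quaternion b; moreover A and B commute: A * B = B * A. This realizes the Lie algebra decomposition so(4) ≅ su(2) ⊕ su(2). -/
/-
Left and right multiplications on `ℍ` commute by associativity. In coordinates, `L_a + R_b`
for purely imaginary `a`, `b` is skew-symmetric, and its entries below the diagonal are
`a.imI ± b.imI`, `a.imJ ± b.imJ`, `a.imK ± b.imK`, each sum and difference occurring once.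
So these six entries determine `a` and `b`, and conversely any values of them, hence any
skew-symmetric matrix, are attained: `(a, b) ↦ L_a + R_b` is a linear isomorphism from
`Im ℍ × Im ℍ` onto `so(4)`.
-/

open Matrix

/-- The 4×4 real matrix (in the basis `{1, i, j, k}` of `ℍ`) of left
multiplication `v ↦ a * v` by a quaternion `a`. -/
noncomputable def quatLeftMulMatrix (a : Quaternion ℝ) : Matrix (Fin 4) (Fin 4) ℝ :=
  LinearMap.toMatrix
    (QuaternionAlgebra.basisOneIJK (-1 : ℝ) 0 (-1))
    (QuaternionAlgebra.basisOneIJK (-1 : ℝ) 0 (-1))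
    (LinearMap.mulLeft ℝ a)

/-- The 4×4 real matrix (in the basis `{1, i, j, k}` of `ℍ`) of right
multiplication `v ↦ v * b` by a quaternion `b`. -/
noncomputable def quatRightMulMatrix (b : Quaternion ℝ) : Matrix (Fin 4) (Fin 4) ℝ :=
  LinearMap.toMatrix
    (QuaternionAlgebra.basisOneIJK (-1 : ℝ) 0 (-1))
    (QuaternionAlgebra.basisOneIJK (-1 : ℝ) 0 (-1))
    (LinearMap.mulRight ℝ b)

lemma quatLeftMulMatrix_eq (a : Quaternion ℝ) : quatLeftMulMatrix a =
    !![a.re, -a.imI, -a.imJ, -a.imK;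
       a.imI, a.re, -a.imK, a.imJ;
       a.imJ, a.imK, a.re, -a.imI;
       a.imK, -a.imJ, a.imI, a.re] := by
  obtain ⟨r, x, y, z⟩ := a
  ext i j
  fin_cases i <;> fin_cases j <;>
    simp [quatLeftMulMatrix, LinearMap.toMatrix_apply, QuaternionAlgebra.basisOneIJK,
      Module.Basis.coe_ofEquivFun, QuaternionAlgebra.equivTuple, LinearMap.mulLeft,
      AddMonoidHom.mulLeft, QuaternionAlgebra.mk_mul_mk]

lemma quatRightMulMatrix_eq (b : Quaternion ℝ) : quatRightMulMatrix b =
    !![b.re, -b.imI, -b.imJ, -b.imK;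
       b.imI, b.re, b.imK, -b.imJ;
       b.imJ, -b.imK, b.re, b.imI;
       b.imK, b.imJ, -b.imI, b.re] := by
  obtain ⟨r, x, y, z⟩ := b
  ext i j
  fin_cases i <;> fin_cases j <;>
    simp [quatRightMulMatrix, LinearMap.toMatrix_apply, QuaternionAlgebra.basisOneIJK,
      Module.Basis.coe_ofEquivFun, QuaternionAlgebra.equivTuple, LinearMap.mulRight,
      AddMonoidHom.mulRight, QuaternionAlgebra.mk_mul_mk]

lemma commute_quatLeftMulMatrix_quatRightMulMatrix (a b : Quaternion ℝ) :
    Commute (quatLeftMulMatrix a) (quatRightMulMatrix b) := by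
  unfold Commute SemiconjBy quatLeftMulMatrix quatRightMulMatrix
  rw [← LinearMap.toMatrix_comp, ← LinearMap.toMatrix_comp]
  exact congrArg _ (LinearMap.commute_mulLeft_right (R := ℝ) (A := Quaternion ℝ) a b)

/-- The imaginary quaternion `a` with `X = L_a + R_b`, read off from the entries of `X`. -/
noncomputable def so4LeftPart (X : Matrix (Fin 4) (Fin 4) ℝ) : Quaternion ℝ :=
  ⟨0, (X 1 0 + X 3 2) / 2, (X 2 0 + X 1 3) / 2, (X 3 0 + X 2 1) / 2⟩

/-- The imaginary quaternion `b` with `X = L_a + R_b`, read off from the entries of `X`. -/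
noncomputable def so4RightPart (X : Matrix (Fin 4) (Fin 4) ℝ) : Quaternion ℝ :=
  ⟨0, (X 1 0 - X 3 2) / 2, (X 2 0 - X 1 3) / 2, (X 3 0 - X 2 1) / 2⟩

lemma quatLeftMulMatrix_add_quatRightMulMatrix_so4Part {X : Matrix (Fin 4) (Fin 4) ℝ}
    (hX : Xᵀ = -X) :
    quatLeftMulMatrix (so4LeftPart X) + quatRightMulMatrix (so4RightPart X) = X := by
  have skew : ∀ i j, X j i = -X i j := fun i j => congrFun (congrFun hX i) j
  rw [quatLeftMulMatrix_eq, quatRightMulMatrix_eq]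
  ext i j
  fin_cases i <;> fin_cases j <;> simp [so4LeftPart, so4RightPart] <;>
    linarith [skew 0 0, skew 1 1, skew 2 2, skew 3 3, skew 0 1, skew 0 2, skew 0 3,
      skew 1 2, skew 1 3, skew 2 3]

lemma so4Part_quatLeftMulMatrix_add_quatRightMulMatrix {a b : Quaternion ℝ}
    (ha : a.re = 0) (hb : b.re = 0) :
    so4LeftPart (quatLeftMulMatrix a + quatRightMulMatrix b) = a ∧
      so4RightPart (quatLeftMulMatrix a + quatRightMulMatrix b) = b := by
  rw [quatLeftMulMatrix_eq, quatRightMulMatrix_eq]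
  constructor <;> ext <;> simp [so4LeftPart, so4RightPart, ha, hb] <;> ring

/-- Every 4×4 real skew-symmetric matrix `X` decomposes uniquely as
`X = A + B`, where `A` is the matrix of left multiplication by a purely
imaginary quaternion and `B` is the matrix of right multiplication by a purely
imaginary quaternion; moreover `A` and `B` commute. This realizes
`so(4) ≅ su(2) ⊕ su(2)`. -/
theorem so4_isoclinic_lie_algebra_decomposition
    (X : Matrix (Fin 4) (Fin 4) ℝ) (hX : Xᵀ = -X) :
    ∃! p : Quaternion ℝ × Quaternion ℝ,
      p.1.re = 0 ∧ p.2.re = 0 ∧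
      X = quatLeftMulMatrix p.1 + quatRightMulMatrix p.2 ∧
      quatLeftMulMatrix p.1 * quatRightMulMatrix p.2
        = quatRightMulMatrix p.2 * quatLeftMulMatrix p.1 := by
  refine ⟨(so4LeftPart X, so4RightPart X),
    ⟨rfl, rfl, (quatLeftMulMatrix_add_quatRightMulMatrix_so4Part hX).symm,
      commute_quatLeftMulMatrix_quatRightMulMatrix _ _⟩, ?_⟩
  rintro ⟨a, b⟩ ⟨ha, hb, rfl, -⟩
  obtain ⟨hleft, hright⟩ := so4Part_quatLeftMulMatrix_add_quatRightMulMatrix ha hb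
  rw [hleft, hright]
end
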